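/- Let G=(V,ξ) be a graph with |V|∈{2,3}. If some vector α of positive reals satisfies Ncond for G, then |V|=3 and G is the complete graph on its 3 vertices. Consequently, matching graphs with 2 or 3 nodes do not exhibit a Braess paradox: there is no graph G on at most 3 vertices with a pair of distinct non-adjacent vertices for which some positive α satisfies Ncond. -/

import Mathlib

open Classical Finset

noncomputable section

def nbr {V : Type} [Fintype V] (G : SimpleGraph V) (S : Finset V) : Finset V :=
  Finset.univ.filter fun j => ∃ i ∈ S, G.Adj i j

def aSum {V : Type} (α : V → ℝ) (S : Finset V) : ℝ := ∑ i ∈ S, α i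

def IsIndep {V : Type} (G : SimpleGraph V) (I : Finset V) : Prop :=
  I.Nonempty ∧ ∀ i ∈ I, ∀ j ∈ I, ¬ G.Adj i j

def indepSets {V : Type} [Fintype V] (G : SimpleGraph V) : Finset (Finset V) :=
  Finset.univ.filter fun I => IsIndep G I

def Ncond {V : Type} [Fintype V] (G : SimpleGraph V) (α : V → ℝ) : Prop :=
  ∀ I ∈ indepSets G, aSum α I < aSum α (nbr G I)

def Tlist {V : Type} [Fintype V] [DecidableEq V] (G : SimpleGraph V) (α : V → ℝ) :
    List V → Finset V → ℝ
  | [], _ => 1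
  | i :: l, P =>
      α i / (aSum α (nbr G (insert i P)) - aSum α (insert i P)) * Tlist G α l (insert i P)

def Erat {V : Type} [Fintype V] [DecidableEq V] (G : SimpleGraph V) (α : V → ℝ) :
    List V → Finset V → ℝ
  | [], _ => 0
  | i :: l, P =>
      aSum α (nbr G (insert i P)) / (aSum α (nbr G (insert i P)) - aSum α (insert i P)) +
        Erat G α l (insert i P)

def TI {V : Type} [Fintype V] [DecidableEq V] (G : SimpleGraph V) (α : V → ℝ) (I : Finset V) : ℝ :=
  ∑ l ∈ I.toList.permutations.toFinset, Tlist G α l ∅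

def EI {V : Type} [Fintype V] [DecidableEq V] (G : SimpleGraph V) (α : V → ℝ) (I : Finset V) : ℝ :=
  ∑ l ∈ I.toList.permutations.toFinset, Erat G α l ∅ * Tlist G α l ∅

def meanQ {V : Type} [Fintype V] [DecidableEq V] (G : SimpleGraph V) (α : V → ℝ) : ℝ :=
  (1 + ∑ I ∈ indepSets G, TI G α I)⁻¹ * ∑ I ∈ indepSets G, EI G α I

def IsWord {V : Type} (G : SimpleGraph V) (w : List V) : Prop :=
  w.Pairwise fun a b => ¬ G.Adj a b

def piHatAux {V : Type} [Fintype V] [DecidableEq V] (G : SimpleGraph V) (α : V → ℝ) :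
    List V → Finset V → ℝ
  | [], _ => 1
  | i :: l, P => α i / aSum α (nbr G (insert i P)) * piHatAux G α l (insert i P)

def piHat {V : Type} [Fintype V] [DecidableEq V] (G : SimpleGraph V) (α : V → ℝ) (w : List V) : ℝ :=
  piHatAux G α w ∅

def addEdge {V : Type} (G : SimpleGraph V) (u v : V) : SimpleGraph V :=
  G ⊔ SimpleGraph.fromEdgeSet {s(u, v)}

end

/-!
Since an independent set `I` has all its neighbours outside `I`, Ncond with nonnegative weights
forces `|α_I| < |α_{Iᶜ}|`. Two independent sets `I`, `J` with `Iᶜ ⊆ J` (hence `Jᶜ ⊆ I`) then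
each have to outweigh the other. On at most three vertices such a pair always exists unless the
graph is a triangle: a non-edge `{i, j}` together with the vertex left over, or on two vertices
any vertex together with the other one.
-/

variable {V : Type} {G : SimpleGraph V} {α : V → ℝ}

lemma aSum_mono (hα : ∀ i, 0 ≤ α i) {S T : Finset V} (hST : S ⊆ T) :
    aSum α S ≤ aSum α T :=
  sum_le_sum_of_subset_of_nonneg hST fun i _ _ => hα i

lemma isIndep_singleton (v : V) : IsIndep G {v} :=
  ⟨singleton_nonempty v, by simp⟩

variable [DecidableEq V]

lemma isIndep_pair {i j : V} (hij : ¬ G.Adj i j) : IsIndep G {i, j} :=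
  ⟨insert_nonempty i {j}, by simp [hij, G.adj_comm j i]⟩

variable [Fintype V]

lemma IsIndep.nbr_subset_compl {I : Finset V} (hI : IsIndep G I) : nbr G I ⊆ Iᶜ := by
  intro j hj
  obtain ⟨i, hi, hij⟩ := (mem_filter.mp hj).2
  exact mem_compl.mpr fun hj => hI.2 i hi j hj hij

lemma Ncond.aSum_lt_aSum_compl (hN : Ncond G α) (hα : ∀ i, 0 ≤ α i)
    {I : Finset V} (hI : IsIndep G I) : aSum α I < aSum α Iᶜ :=
  (hN I (mem_filter.mpr ⟨mem_univ I, hI⟩)).trans_le (aSum_mono hα hI.nbr_subset_compl)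

lemma not_ncond_of_compl_subset (hα : ∀ i, 0 ≤ α i) {I J : Finset V} (hI : IsIndep G I)
    (hJ : IsIndep G J) (hIJ : Iᶜ ⊆ J) : ¬ Ncond G α := fun hN =>
  have hI_lt := hN.aSum_lt_aSum_compl hα hI
  have hJ_lt := hN.aSum_lt_aSum_compl hα hJ
  have hJI : Jᶜ ⊆ I := compl_le_iff_compl_le.mp hIJ
  by linarith [aSum_mono hα hIJ, aSum_mono hα hJI]

lemma not_ncond_of_card_compl_le_one (hα : ∀ i, 0 ≤ α i) {I : Finset V} (hI : IsIndep G I)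
    (hcard : #Iᶜ ≤ 1) : ¬ Ncond G α := by
  have : Nonempty V := ⟨hI.1.choose⟩
  obtain ⟨k, hk⟩ := card_le_one_iff_subset_singleton.mp hcard
  exact not_ncond_of_compl_subset hα hI (isIndep_singleton k) hk

lemma adj_of_ncond (hα : ∀ i, 0 ≤ α i) (hN : Ncond G α) (hV : Fintype.card V ≤ 3) {i j : V}
    (hij : i ≠ j) : G.Adj i j := by
  by_contra hnadj
  refine not_ncond_of_card_compl_le_one hα (isIndep_pair hnadj) ?_ hN
  rw [card_compl, card_pair hij]
  omega

theorem stmt12 :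
    (∀ (V : Type) [Fintype V] [DecidableEq V] (G : SimpleGraph V),
      (Fintype.card V = 2 ∨ Fintype.card V = 3) →
      (∃ α : V → ℝ, (∀ i, 0 < α i) ∧ Ncond G α) →
      Fintype.card V = 3 ∧ G = ⊤) ∧
    (∀ (V : Type) [Fintype V] [DecidableEq V] (G : SimpleGraph V),
      Fintype.card V ≤ 3 →
      ¬ ∃ i j : V, i ≠ j ∧ ¬ G.Adj i j ∧ ∃ α : V → ℝ, (∀ i, 0 < α i) ∧ Ncond G α) := by
  refine ⟨fun V _ _ G hV ⟨α, hpos, hN⟩ => ⟨?_, ?_⟩,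
    fun V _ _ G hV ⟨i, j, hij, hnadj, α, hpos, hN⟩ =>
      hnadj (adj_of_ncond (fun i => (hpos i).le) hN hV hij)⟩
  · refine hV.resolve_left fun hV2 => ?_
    have : Nonempty V := Fintype.card_pos_iff.mp (by omega)
    refine not_ncond_of_card_compl_le_one (fun i => (hpos i).le)
      (isIndep_singleton (Classical.arbitrary V)) ?_ hN
    rw [card_compl, card_singleton]
    omega
  · ext i j
    exact ⟨SimpleGraph.Adj.ne,
      adj_of_ncond (fun i => (hpos i).le) hN (by omega)⟩
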